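/- arXiv:2205.12457 — 2 statements merged into one kernel-verified Lean document; each statement's English description precedes it below -/
import Mathlib

section
/- For 0 < α < 1, the second derivative of η_α satisfies |η_α''(x)| ≤ K₂(α) for all x in (0, π), where K₂(α) = (K₁(α)² - 1)/2 and K₁(α) = max{α/(1-α), (1-α)/α}. -/
open Real Set

/-!
With `κ = α/(1-α)`, `s = sin (x/2)`, `c = cos (x/2)` and `D = s² + κ²c²`, the chain rule gives
`η' = -κ/D` and `η'' = κ(1-κ²)sc/D²`. Writing `m = min 1 κ²`, the constant is
`K₂ = |1-κ²|/(2m)`, so the bound amounts to `2mκ|sc| ≤ D²`: the product of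
`m ≤ D` (`D` is a convex combination of `1` and `κ²`) and `2κ|sc| ≤ D` (AM-GM).
-/

lemma Real.hasDerivAt_cot {x : ℝ} (h : sin x ≠ 0) : HasDerivAt cot (-1 / sin x ^ 2) x := by
  have hquot := (hasDerivAt_cos x).div (hasDerivAt_sin x) h
  rw [show cot = fun y => cos y / sin y from funext cot_eq_cos_div_sin]
  refine hquot.congr_deriv ?_
  rw [div_eq_div_iff (by positivity) (by positivity)]
  linear_combination (- sin x ^ 2) * sin_sq_add_cos_sq x

lemma min_le_sq_add_mul_sq {s c k : ℝ} (h : s ^ 2 + c ^ 2 = 1) : min 1 k ≤ s ^ 2 + k * c ^ 2 := by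
  calc min 1 k = min 1 k * (s ^ 2 + c ^ 2) := by rw [h, mul_one]
    _ ≤ 1 * s ^ 2 + k * c ^ 2 := by
      rw [mul_add]
      gcongr
      exacts [min_le_left _ _, min_le_right _ _]
    _ = s ^ 2 + k * c ^ 2 := by rw [one_mul]

lemma sin_sq_add_mul_cos_sq_pos {κ : ℝ} (hκ : κ ≠ 0) (y : ℝ) :
    0 < sin y ^ 2 + κ ^ 2 * cos y ^ 2 :=
  (lt_min one_pos (by positivity)).trans_le (min_le_sq_add_mul_sq (sin_sq_add_cos_sq y))

lemma max_inv_sq_sub_one_mul_min {κ : ℝ} (hκ : 0 < κ) :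
    ((max κ κ⁻¹) ^ 2 - 1) * min 1 (κ ^ 2) = |1 - κ ^ 2| := by
  rcases le_total 1 κ with h | h
  · have hsq : 1 ≤ κ ^ 2 := one_le_pow₀ h
    rw [max_eq_left ((inv_le_one_of_one_le₀ h).trans h), min_eq_left hsq,
      abs_of_nonpos (by linarith)]
    ring
  · have hsq : κ ^ 2 ≤ 1 := pow_le_one₀ hκ.le h
    rw [max_eq_right (h.trans ((one_le_inv₀ hκ).2 h)), min_eq_right hsq, abs_of_nonneg (by linarith)]
    field_simp

lemma abs_mul_one_sub_sq_mul_div_sq_le {κ s c : ℝ} (hκ : 0 < κ) (hsc : s ^ 2 + c ^ 2 = 1) :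
    |κ * ((1 - κ ^ 2) * (s * c)) / (s ^ 2 + κ ^ 2 * c ^ 2) ^ 2| ≤ ((max κ κ⁻¹) ^ 2 - 1) / 2 := by
  set D := s ^ 2 + κ ^ 2 * c ^ 2
  set m := min 1 (κ ^ 2)
  have hm : 0 < m := lt_min one_pos (by positivity)
  have hmD : m ≤ D := min_le_sq_add_mul_sq hsc
  have hamgm : 2 * κ * |s * c| ≤ D := by
    have := two_mul_le_add_sq |s| (κ * |c|)
    rw [mul_pow, sq_abs, sq_abs] at this
    rw [abs_mul]
    linarith
  have hkey : m * (2 * κ * |s * c|) ≤ D ^ 2 := by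
    rw [sq]; exact mul_le_mul hmD hamgm (by positivity) (hm.le.trans hmD)
  calc |κ * ((1 - κ ^ 2) * (s * c)) / D ^ 2| = κ * |1 - κ ^ 2| * |s * c| / D ^ 2 := by
        rw [abs_div, abs_mul, abs_mul, abs_of_pos hκ, abs_of_nonneg (sq_nonneg D), mul_assoc]
    _ ≤ |1 - κ ^ 2| / (2 * m) := by
        rw [div_le_div_iff₀ (by nlinarith) (by positivity)]
        nlinarith [mul_le_mul_of_nonneg_left hkey (abs_nonneg (1 - κ ^ 2))]
    _ = ((max κ κ⁻¹) ^ 2 - 1) / 2 := by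
        rw [← max_inv_sq_sub_one_mul_min hκ, mul_div_mul_right _ _ hm.ne']

lemma hasDerivAt_two_mul_arctan_mul_cot_half (κ : ℝ) {y : ℝ} (hy : sin (y / 2) ≠ 0) :
    HasDerivAt (fun y => 2 * arctan (κ * cot (y / 2)))
      (-κ / (sin (y / 2) ^ 2 + κ ^ 2 * cos (y / 2) ^ 2)) y := by
  have hhalf : HasDerivAt (fun y : ℝ => y / 2) (1 / 2) y := by
    simpa using (hasDerivAt_id y).div_const 2
  have h := (((hasDerivAt_cot hy).comp y hhalf).const_mul κ).arctan.const_mul 2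
  refine h.congr_deriv ?_
  simp only [Function.comp_apply]
  have hD : sin (y / 2) ^ 2 + κ ^ 2 * cos (y / 2) ^ 2 ≠ 0 := by positivity
  rw [cot_eq_cos_div_sin]
  field_simp

lemma hasDerivAt_neg_div_sin_sq_add_mul_cos_sq_half {κ : ℝ} (hκ : κ ≠ 0) (y : ℝ) :
    HasDerivAt (fun y => -κ / (sin (y / 2) ^ 2 + κ ^ 2 * cos (y / 2) ^ 2))
      (κ * ((1 - κ ^ 2) * (sin (y / 2) * cos (y / 2))) /
        (sin (y / 2) ^ 2 + κ ^ 2 * cos (y / 2) ^ 2) ^ 2) y := by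
  have hhalf : HasDerivAt (fun y : ℝ => y / 2) (1 / 2) y := by
    simpa using (hasDerivAt_id y).div_const 2
  have h := (hasDerivAt_const y (-κ)).div
    ((hhalf.sin.pow 2).add ((hhalf.cos.pow 2).const_mul (κ ^ 2)))
    (sin_sq_add_mul_cos_sq_pos hκ (y / 2)).ne'
  refine h.congr_deriv ?_
  simp only [Pi.add_apply, Pi.pow_apply]
  field_simp
  ring

/-- `|η_α''(x)| ≤ K₂(α) = (K₁(α)² - 1)/2` on `(0, π)`, where
`K₁(α) = max{α/(1-α), (1-α)/α}`. -/
theorem eta_second_deriv_bound (α : ℝ) (hα0 : 0 < α) (hα1 : α < 1) :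
    ∀ x ∈ Ioo (0 : ℝ) π,
      |deriv (deriv (fun y : ℝ => 2 * arctan ((α / (1 - α)) * Real.cot (y / 2)))) x|
        ≤ ((max (α / (1 - α)) ((1 - α) / α)) ^ 2 - 1) / 2 := by
  intro x hx
  set κ := α / (1 - α)
  have hκ : 0 < κ := div_pos hα0 (sub_pos.2 hα1)
  have hκinv : (1 - α) / α = κ⁻¹ := (inv_div _ _).symm
  have hderiv : deriv (fun y => 2 * arctan (κ * cot (y / 2)))
      =ᶠ[nhds x] fun y => -κ / (sin (y / 2) ^ 2 + κ ^ 2 * cos (y / 2) ^ 2) := by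
    filter_upwards [isOpen_Ioo.mem_nhds hx] with y hy
    exact (hasDerivAt_two_mul_arctan_mul_cot_half κ
      (sin_pos_of_pos_of_lt_pi (half_pos hy.1) (by linarith [hy.2, pi_pos])).ne').deriv
  rw [hderiv.deriv_eq, (hasDerivAt_neg_div_sin_sq_add_mul_cos_sq_half hκ.ne' x).deriv, hκinv]
  exact abs_mul_one_sub_sq_mul_div_sq_le hκ (sin_sq_add_cos_sq (x / 2))
end

section
/- For any complex parameters δ, ε, σ, τ and n ≥ 3, let A_n be the n×n matrix with A[1,1] = 2-δ, A[n,n] = 2-τ, A[1,n] = -ε, A[n,1] = -σ, A[k,k] = 2 for 2 ≤ k ≤ n-1, A[k,k+1] = A[k+1,k] = -1 for 1 ≤ k ≤ n-1, and zeros elsewhere. Then det(λI - A_n) = U_n((λ-2)/2) + (δ+τ)·U_{n-1}((λ-2)/2) + (δτ - εσ)·U_{n-2}((λ-2)/2) + (-1)^{n+1}(ε+σ), where U_k is the k-th Chebyshev polynomial of the second kind. -/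
/-!
With `x = (λ - 2) / 2`, the matrix `λI - Aₙ` is the tridiagonal matrix with diagonal `2x` and
off-diagonal entries `1`, whose determinant is `Uₙ(x)` by the three-term Chebyshev recurrence,
plus four single-entry perturbations at the corners. Adding `c` to the entry `(i, j)` changes the
determinant by `± c` times the `(i, j)` minor, so the perturbations can be peeled off one at a
time; the minors that appear are again tridiagonal (possibly with one corner perturbation left)
or triangular with unit diagonal.
-/

open Matrix Polynomial Finset

variable {R : Type*} [CommRing R]

theorem Matrix.det_add_single {n : ℕ} (A : Matrix (Fin (n + 1)) (Fin (n + 1)) R)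
    (i j : Fin (n + 1)) (c : R) :
    (A + single i j c).det
      = A.det + (-1) ^ (i + j : ℕ) * c * (A.submatrix i.succAbove j.succAbove).det := by
  have hminor : ∀ k : Fin (n + 1), (A + single i j c).submatrix i.succAbove k.succAbove
      = A.submatrix i.succAbove k.succAbove := fun k => by
    ext a b
    simp
  rw [det_succ_row _ i, det_succ_row A i]
  simp only [hminor, Matrix.add_apply, mul_add, add_mul, sum_add_distrib, single_apply, true_and]
  simp [Finset.sum_ite_eq]

def tridiag (R : Type*) [CommRing R] (n : ℕ) (x : R) : Matrix (Fin n) (Fin n) R :=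
  of fun i j => if i = j then 2 * x else if (i : ℕ) + 1 = j ∨ (j : ℕ) + 1 = i then 1 else 0

theorem tridiag_transpose (n : ℕ) (x : R) : (tridiag R n x)ᵀ = tridiag R n x := by
  ext i j
  simp only [tridiag, transpose_apply, of_apply, eq_comm, or_comm]

theorem tridiag_submatrix_succ (n : ℕ) (x : R) :
    (tridiag R (n + 1) x).submatrix Fin.succ Fin.succ = tridiag R n x := by
  ext i j
  simp [tridiag, Fin.succ_inj]

theorem tridiag_submatrix_castSucc (n : ℕ) (x : R) :
    (tridiag R (n + 1) x).submatrix Fin.castSucc Fin.castSucc = tridiag R n x := by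
  ext i j
  simp [tridiag]

theorem det_tridiag_submatrix_castSucc_succ (n : ℕ) (x : R) :
    ((tridiag R (n + 1) x).submatrix Fin.castSucc Fin.succ).det = 1 := by
  rw [det_of_isLowerTriangular]
  · refine prod_eq_one fun i _ => ?_
    simp [tridiag, Fin.ext_iff]
  · intro i j (hij : (i : ℕ) < j)
    simp only [tridiag, Fin.ext_iff, submatrix_apply, of_apply, Fin.val_castSucc, Fin.val_succ,
      Nat.add_right_cancel_iff]
    split_ifs <;> first | rfl | omega

theorem det_tridiag_submatrix_succ_castSucc (n : ℕ) (x : R) :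
    ((tridiag R (n + 1) x).submatrix Fin.succ Fin.castSucc).det = 1 := by
  rw [← det_tridiag_submatrix_castSucc_succ n x, ← det_transpose, transpose_submatrix,
    tridiag_transpose]

theorem det_tridiag_add_two (n : ℕ) (x : R) :
    (tridiag R (n + 2) x).det = 2 * x * (tridiag R (n + 1) x).det - (tridiag R n x).det := by
  -- the first column of this minor is `(1, 0, …, 0)`
  have hminor : ((tridiag R (n + 2) x).submatrix Fin.succ (Fin.succAbove 1)).det
      = (tridiag R n x).det := by
    have hsub : ((tridiag R (n + 2) x).submatrix Fin.succ (Fin.succAbove 1)).submatrix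
        Fin.succ Fin.succ = tridiag R n x := by
      ext i j
      simp [tridiag, Fin.succ_inj]
    rw [det_succ_column_zero, Fin.sum_univ_succ]
    simp only [Fin.val_zero, pow_zero, one_mul, submatrix_apply, Fin.succ_zero_eq_one,
      Fin.succAbove_ne_zero_zero one_ne_zero, Fin.succAbove_zero, hsub, Fin.val_succ]
    simp [tridiag, Fin.ext_iff]
  have h₀₀ : tridiag R (n + 2) x 0 0 = 2 * x := by simp [tridiag]
  have h₀₁ : tridiag R (n + 2) x 0 1 = 1 := by simp [tridiag]
  have h₀ : ∀ j : Fin n, tridiag R (n + 2) x 0 j.succ.succ = 0 := fun j => by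
    simp [tridiag, Fin.ext_iff]
  rw [det_succ_row_zero, Fin.sum_univ_succ, Fin.sum_univ_succ]
  simp only [Fin.val_zero, pow_zero, one_mul, Fin.succAbove_zero, tridiag_submatrix_succ,
    Fin.succ_zero_eq_one, Fin.val_one, pow_one, neg_mul, hminor, h₀₀, h₀₁, h₀, mul_zero, zero_mul,
    sum_const_zero, add_zero]
  ring

theorem det_tridiag (n : ℕ) (x : R) : (tridiag R n x).det = (Chebyshev.U R n).eval x := by
  induction n using Nat.twoStepInduction with
  | zero => simp
  | one => simp [tridiag]
  | more n ih₀ ih₁ =>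
    rw [det_tridiag_add_two, ih₀, ih₁]
    push_cast
    simp [Chebyshev.U_add_two]

theorem det_tridiag_add_single_last_last (n : ℕ) (x τ : R) :
    (tridiag R (n + 1) x + single (Fin.last n) (Fin.last n) τ).det
      = (Chebyshev.U R (n + 1)).eval x + τ * (Chebyshev.U R n).eval x := by
  rw [det_add_single, Fin.succAbove_last, tridiag_submatrix_castSucc, det_tridiag, det_tridiag]
  simp [Even.neg_one_pow ⟨n, rfl⟩]

theorem det_tridiag_add_single_last_zero (n : ℕ) (x σ : R) :
    (tridiag R (n + 1) x + single (Fin.last n) 0 σ).det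
      = (Chebyshev.U R (n + 1)).eval x + (-1) ^ n * σ := by
  rw [det_add_single, Fin.succAbove_last, Fin.succAbove_zero, det_tridiag_submatrix_castSucc_succ,
    det_tridiag]
  simp

theorem det_tridiag_add_offdiag_corners (n : ℕ) (x σ ε : R) :
    (tridiag R (n + 2) x + single (Fin.last (n + 1)) 0 σ + single 0 (Fin.last (n + 1)) ε).det
      = (Chebyshev.U R (n + 2)).eval x + (-1) ^ (n + 1) * (σ + ε)
        - ε * σ * (Chebyshev.U R n).eval x := by
  have hminor : (tridiag R (n + 2) x + single (Fin.last (n + 1)) 0 σ).submatrix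
      Fin.succ Fin.castSucc = (tridiag R (n + 2) x).submatrix Fin.succ Fin.castSucc
        + single (Fin.last n) 0 σ := by
    ext i j
    simp [single_apply, Fin.ext_iff]
  have hminor₂ : ((tridiag R (n + 2) x).submatrix Fin.succ Fin.castSucc).submatrix
      Fin.castSucc Fin.succ = tridiag R n x := by
    ext i j
    simp [tridiag]
  have hsign : (-1 : R) ^ (n + 1) * (-1) ^ n = -1 := by
    rw [← pow_add]
    exact Odd.neg_one_pow ⟨n, by ring⟩
  rw [det_add_single, det_tridiag_add_single_last_zero, Fin.succAbove_zero, Fin.succAbove_last,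
    hminor, det_add_single, Fin.succAbove_last, Fin.succAbove_zero, hminor₂,
    det_tridiag_submatrix_succ_castSucc, det_tridiag]
  simp only [Fin.val_zero, Fin.val_last, zero_add, add_zero]
  rw [show ((n + 1 : ℕ) : ℤ) + 1 = n + 2 by push_cast; ring]
  linear_combination ε * σ * (Chebyshev.U R n).eval x * hsign

theorem det_tridiag_add_corners (n : ℕ) (x δ ε σ τ : R) :
    (tridiag R (n + 2) x + single (Fin.last (n + 1)) 0 σ + single 0 (Fin.last (n + 1)) ε
        + single (Fin.last (n + 1)) (Fin.last (n + 1)) τ + single 0 0 δ).det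
      = (Chebyshev.U R (n + 2)).eval x + (δ + τ) * (Chebyshev.U R (n + 1)).eval x
        + (δ * τ - ε * σ) * (Chebyshev.U R n).eval x + (-1) ^ (n + 1) * (ε + σ) := by
  have hminor₀ : (tridiag R (n + 2) x + single (Fin.last (n + 1)) 0 σ
      + single 0 (Fin.last (n + 1)) ε + single (Fin.last (n + 1)) (Fin.last (n + 1)) τ).submatrix
        Fin.succ Fin.succ = tridiag R (n + 1) x + single (Fin.last n) (Fin.last n) τ := by
    ext i j
    simp only [submatrix_apply, Matrix.add_apply, single_apply, tridiag, of_apply, Fin.ext_iff,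
      Fin.val_succ, Fin.val_last, Fin.val_zero, Nat.right_eq_add, Nat.add_eq_zero_iff,
      one_ne_zero, and_false, false_and, if_false, add_zero]
    split_ifs <;> first | omega | ring
  have hminor_last : (tridiag R (n + 2) x + single (Fin.last (n + 1)) 0 σ
      + single 0 (Fin.last (n + 1)) ε).submatrix Fin.castSucc Fin.castSucc
        = tridiag R (n + 1) x := by
    ext i j
    simp only [submatrix_apply, Matrix.add_apply, single_apply, tridiag, of_apply, Fin.ext_iff,
      Fin.val_castSucc, Fin.val_last, Fin.val_zero]
    split_ifs <;> first | omega | ring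
  rw [det_add_single, Fin.succAbove_zero, hminor₀, det_tridiag_add_single_last_last,
    det_add_single, Fin.succAbove_last, hminor_last, det_tridiag_add_offdiag_corners,
    det_tridiag]
  simp only [Fin.val_zero, Fin.val_last, Even.neg_one_pow ⟨n + 1, rfl⟩]
  push_cast
  ring

/-- Characteristic polynomial of the tridiagonal Toeplitz matrix with diagonals `-1, 2, -1`
and corner perturbations `δ, ε, σ, τ`:
`det(λI - Aₙ) = U_n((λ-2)/2) + (δ+τ)U_{n-1}((λ-2)/2) + (δτ-εσ)U_{n-2}((λ-2)/2)
+ (-1)^{n+1}(ε+σ)`. -/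
theorem charpoly_tridiag_corner_perturbations (n : ℕ) (hn : 3 ≤ n)
    (δ ε σ τ : ℂ)
    (A : Matrix (Fin n) (Fin n) ℂ)
    (hA : ∀ i j : Fin n, A i j =
      if i = j then
        (if (i : ℕ) = 0 then 2 - δ
         else if (i : ℕ) = n - 1 then 2 - τ else 2)
      else if (i : ℕ) + 1 = (j : ℕ) ∨ (j : ℕ) + 1 = (i : ℕ) then -1
      else if (i : ℕ) = 0 ∧ (j : ℕ) = n - 1 then -ε
      else if (i : ℕ) = n - 1 ∧ (j : ℕ) = 0 then -σ
      else 0) :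
    ∀ lam : ℂ,
      (lam • (1 : Matrix (Fin n) (Fin n) ℂ) - A).det
        = (Chebyshev.U ℂ (n : ℤ)).eval ((lam - 2) / 2)
          + (δ + τ) * (Chebyshev.U ℂ ((n : ℤ) - 1)).eval ((lam - 2) / 2)
          + (δ * τ - ε * σ) * (Chebyshev.U ℂ ((n : ℤ) - 2)).eval ((lam - 2) / 2)
          + (-1) ^ (n + 1) * (ε + σ) := by
  intro lam
  obtain ⟨k, rfl⟩ : ∃ k, n = k + 3 := ⟨n - 3, by omega⟩
  -- needs `n ≥ 3`: for smaller `n` the `-1` branch of `hA` overrides the corner entries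
  have hM : lam • (1 : Matrix (Fin (k + 3)) (Fin (k + 3)) ℂ) - A
      = tridiag ℂ (k + 3) ((lam - 2) / 2) + single (Fin.last (k + 2)) 0 σ
        + single 0 (Fin.last (k + 2)) ε + single (Fin.last (k + 2)) (Fin.last (k + 2)) τ
        + single 0 0 δ := by
    ext i j
    rw [Matrix.sub_apply, hA]
    simp only [Matrix.add_apply, Matrix.smul_apply, single_apply, tridiag, of_apply,
      Matrix.one_apply, Fin.ext_iff, Fin.val_last, Fin.val_zero, smul_eq_mul]
    split_ifs <;> first | omega | ring
  rw [hM, det_tridiag_add_corners (k + 1)]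
  push_cast
  ring_nf
end
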